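/- Let n and j be natural numbers with 1 ≤ 2j ≤ n. Then (in ℚ) ∑_{k=0}^{2j} [(−n)_k (−j)_k (1/2−j)_k] / [(1−j−n/2)_k ((3−n)/2−j)_k · k!] = (n+1−4j) · [n(n−1)···(n−2j+2)] / [(n+2j−2)(n+2j−3)···(n−1)], assuming n is large enough that no denominator Pochhammer symbol vanishes (e.g. n ≥ 2j+2). -/

import Mathlib

/-!
By Legendre duplication, `(a)_k (a + 1/2)_k = (2a)_{2k} / 4^k`, so with `N = n + 2j - 2` the
`k`-th term is `(-1)^k C(n,k) C(2j,2k) / C(N,2k)`. It vanishes for `k > j`, and for `k ≤ j`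
`C(2j,2k) / C(N,2k) = C(N-2k, n-2) / C(N,2j)`. The remaining alternating sum is the coefficient
of `x^{2j}` in `(1 - x²)^n / (1 - x)^(n-1) = (1 - x) (1 + x)^n`, namely `C(n,2j) - C(n,2j-1)`.
-/

/-- Rising factorial (Pochhammer symbol) on ℚ. -/
def poch (x : ℚ) : ℕ → ℚ
  | 0 => 1
  | k + 1 => poch x k * (x + k)

open Finset PowerSeries Nat

theorem ascPochhammer_eval_eq_prod_range {R : Type*} [CommSemiring R] (k : ℕ) (x : R) :
    (ascPochhammer R k).eval x = ∏ i ∈ range k, (x + i) := by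
  induction k with
  | zero => simp
  | succ k ih => rw [ascPochhammer_succ_eval, ih, prod_range_succ]

theorem ascPochhammer_eval_neg_natCast {R : Type*} [CommRing R] (c r : ℕ) :
    (ascPochhammer R r).eval (-(c : R)) = (-1) ^ r * r ! * c.choose r := by
  rw [ascPochhammer_eval_neg_eq_descPochhammer, descPochhammer_eval_eq_descFactorial,
    Nat.descFactorial_eq_factorial_mul_choose]
  push_cast
  ring

theorem ascPochhammer_eval_two_mul {K : Type*} [Field K] [NeZero (2 : K)] (x : K) (k : ℕ) :
    (ascPochhammer K (2 * k)).eval (2 * x) =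
      4 ^ k * (ascPochhammer K k).eval x * (ascPochhammer K k).eval (x + 1 / 2) := by
  induction k with
  | zero => simp
  | succ k ih =>
    rw [show 2 * (k + 1) = 2 * k + 1 + 1 by ring, ascPochhammer_succ_eval, ascPochhammer_succ_eval,
      ih, ascPochhammer_succ_eval, ascPochhammer_succ_eval]
    field_simp
    push_cast
    ring

section

variable {K : Type*} [Field K] [CharZero K]

theorem ascPochhammer_eval_neg_natCast_div_two_mul (c k : ℕ) :
    (ascPochhammer K k).eval (-(c : K) / 2) * (ascPochhammer K k).eval (-(c : K) / 2 + 1 / 2) =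
      (2 * k) ! * c.choose (2 * k) / 4 ^ k := by
  have h := ascPochhammer_eval_two_mul (-(c : K) / 2) k
  rw [mul_div_cancel₀ _ two_ne_zero, ascPochhammer_eval_neg_natCast, (even_two_mul k).neg_one_pow,
    one_mul] at h
  rw [eq_div_iff (pow_ne_zero _ (by norm_num)), h]
  ring

theorem Nat.cast_choose_div_cast_choose {N m k : ℕ} (hkm : k ≤ m) (hmN : m ≤ N) :
    (m.choose k : K) / N.choose k = (N - k).choose (N - m) / N.choose m := by
  have h := Nat.choose_mul (n := N) hkm
  rw [Nat.choose_symm_of_eq_add (show N - k = (m - k) + (N - m) by omega)] at h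
  rw [div_eq_div_iff (by simpa [Nat.choose_eq_zero_iff] using hkm.trans hmN)
    (by simpa [Nat.choose_eq_zero_iff] using hmN)]
  exact_mod_cast (by linarith [h] : m.choose k * N.choose m = (N - k).choose (N - m) * N.choose k)

theorem Nat.cast_choose_succ_sub_cast_choose (n m : ℕ) :
    (n.choose (m + 1) : K) - n.choose m =
      (n - 2 * m - 1) * (∏ i ∈ range m, ((n : K) - i)) / (m + 1) ! := by
  rw [Nat.cast_choose_eq_descPochhammer_div, Nat.cast_choose_eq_descPochhammer_div,
    descPochhammer_succ_eval, descPochhammer_eval_eq_prod_range, Nat.factorial_succ]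
  push_cast
  field_simp
  ring

theorem Nat.cast_choose_two_mul_sub_cast_choose_div (n j : ℕ) (hn : 1 ≤ n) (hj : j ≠ 0) :
    ((n.choose (2 * j) : K) - n.choose (2 * j - 1)) / (n + 2 * j - 2).choose (2 * j) =
      (n + 1 - 4 * j) * (∏ i ∈ range (2 * j - 1), ((n : K) - i)) /
        ∏ i ∈ range (2 * j), ((n : K) - 1 + i) := by
  obtain ⟨m, hm⟩ : ∃ m, 2 * j = m + 1 := ⟨2 * j - 1, by omega⟩
  have hjm : (4 * j : K) = 2 * m + 2 := by exact_mod_cast (by omega : 4 * j = 2 * m + 2)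
  rw [hm, Nat.add_sub_cancel, cast_choose_succ_sub_cast_choose, cast_choose_eq_ascPochhammer_div,
    show n + (m + 1) - 2 - (m + 1 - 1) = n - 1 by omega, ascPochhammer_eval_eq_prod_range,
    div_div_div_cancel_right₀ (Nat.cast_ne_zero.2 (Nat.factorial_ne_zero _)), hjm]
  push_cast [Nat.cast_sub hn]
  ring

end

namespace PowerSeries

variable {R : Type*} [CommRing R]

theorem coeff_one_add_X_pow (N k : ℕ) : coeff k ((1 + X : R⟦X⟧) ^ N) = N.choose k := by
  rw [← Polynomial.coe_X, ← Polynomial.coe_one, ← Polynomial.coe_add, ← Polynomial.coe_pow,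
    Polynomial.coeff_coe, Polynomial.coeff_one_add_X_pow]

theorem coeff_one_sub_X_pow (N k : ℕ) :
    coeff k ((1 - X : R⟦X⟧) ^ N) = (-1) ^ k * N.choose k := by
  have h : (1 - X : R⟦X⟧) ^ N = rescale (-1) ((1 + X) ^ N) := by
    simp [rescale_X, sub_eq_add_neg]
  rw [h, coeff_rescale, coeff_one_add_X_pow]

theorem coeff_expand_mul_mul (p : ℕ) (hp : p ≠ 0) (f g : R⟦X⟧) (m : ℕ) :
    coeff (p * m) (expand p hp f * g) =
      ∑ x ∈ antidiagonal m, coeff x.1 f * coeff (p * x.2) g := by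
  rw [coeff_mul]
  symm
  refine sum_bij_ne_zero (fun x _ _ ↦ (p * x.1, p * x.2)) ?_ ?_ ?_ ?_
  · intro x hx _
    simp only [HasAntidiagonal.mem_antidiagonal] at hx ⊢
    rw [← mul_add, hx]
  · intro x _ _ y _ _ hxy
    simp only [Prod.mk.injEq, mul_right_inj' hp] at hxy
    exact Prod.ext hxy.1 hxy.2
  · intro y hy hne
    simp only [HasAntidiagonal.mem_antidiagonal] at hy
    obtain ⟨a, ha⟩ : p ∣ y.1 := by
      by_contra h
      exact hne (by rw [coeff_expand_of_not_dvd p hp f h, zero_mul])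
    have hpa : p * a ≤ p * m := by
      rw [← ha, ← hy]
      exact le_self_add
    have hb : y.2 = p * (m - a) := by
      rw [Nat.mul_sub, ← hy, ha]
      omega
    have ham : a ≤ m := Nat.le_of_mul_le_mul_left hpa (Nat.pos_of_ne_zero hp)
    refine ⟨(a, m - a), ?_, ?_, Prod.ext ha.symm hb.symm⟩
    · simp only [HasAntidiagonal.mem_antidiagonal]
      omega
    · rwa [ha, hb, coeff_expand_mul] at hne
  · intro x _ _
    rw [coeff_expand_mul]

end PowerSeries

theorem sum_neg_one_pow_mul_choose_mul_choose_add_two_mul {R : Type*} [CommRing R] (d m : ℕ)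
    (hm : m ≠ 0) :
    ∑ k ∈ range (m + 1), (-1) ^ k * ((d + 2).choose k : R) * (d + 2 * (m - k)).choose d =
      (d + 2).choose (2 * m) - (d + 2).choose (2 * m - 1) := by
  set P : R⟦X⟧ := mk fun q ↦ ((d + q).choose d : R)
  have key : expand 2 two_ne_zero ((1 - X) ^ (d + 2)) * P = (1 - X) * (1 + X) ^ (d + 2) := by
    rw [map_pow, map_sub, map_one, expand_X,
      show (1 - X ^ 2 : R⟦X⟧) = (1 - X) * (1 + X) by ring, mul_pow]
    linear_combination (1 - X) * (1 + X) ^ (d + 2) * mk_add_choose_mul_one_sub_pow_eq_one (S := R) d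
  have hcoeff := congrArg (coeff (2 * m)) key
  obtain ⟨m, rfl⟩ := Nat.exists_eq_succ_of_ne_zero hm
  rw [coeff_expand_mul_mul, Nat.sum_antidiagonal_eq_sum_range_succ_mk, sub_mul, one_mul, map_sub,
    show 2 * (m + 1) = 2 * m + 1 + 1 by ring, coeff_succ_X_mul] at hcoeff
  rw [show 2 * (m + 1) - 1 = 2 * m + 1 by omega, show 2 * (m + 1) = 2 * m + 1 + 1 by ring]
  simpa [P, coeff_one_sub_X_pow, coeff_one_add_X_pow] using hcoeff

theorem poch_eq_eval_ascPochhammer (x : ℚ) (k : ℕ) :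
    poch x k = (ascPochhammer ℚ k).eval x := by
  induction k with
  | zero => simp [poch]
  | succ k ih => rw [poch, ih, ascPochhammer_succ_eval]

theorem poch_summand_eq_choose_div_choose (n j k : ℕ) (h : 2 ≤ n + 2 * j) :
    poch (-(n : ℚ)) k * poch (-(j : ℚ)) k * poch (1 / 2 - (j : ℚ)) k
        / (poch (1 - (j : ℚ) - (n : ℚ) / 2) k * poch ((3 - (n : ℚ)) / 2 - (j : ℚ)) k
          * k !) =
      (-1) ^ k * n.choose k * (2 * j).choose (2 * k) / (n + 2 * j - 2).choose (2 * k) := by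
  have e1 : -(j : ℚ) = -((2 * j : ℕ) : ℚ) / 2 := by push_cast; ring
  have e2 : 1 / 2 - (j : ℚ) = -((2 * j : ℕ) : ℚ) / 2 + 1 / 2 := by push_cast; ring
  have e3 : 1 - (j : ℚ) - n / 2 = -((n + 2 * j - 2 : ℕ) : ℚ) / 2 := by
    push_cast [Nat.cast_sub h]; ring
  have e4 : (3 - (n : ℚ)) / 2 - j = -((n + 2 * j - 2 : ℕ) : ℚ) / 2 + 1 / 2 := by
    push_cast [Nat.cast_sub h]; ring
  simp only [poch_eq_eval_ascPochhammer]
  rw [e2, e4, e3, e1, mul_assoc, ascPochhammer_eval_neg_natCast_div_two_mul,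
    ascPochhammer_eval_neg_natCast_div_two_mul, ascPochhammer_eval_neg_natCast]
  have hne : (k ! * (2 * k) ! / 4 ^ k : ℚ) ≠ 0 := by positivity
  calc _ = (k ! * (2 * k) ! / 4 ^ k : ℚ) * ((-1) ^ k * n.choose k * (2 * j).choose (2 * k)) /
        ((k ! * (2 * k) ! / 4 ^ k : ℚ) * (n + 2 * j - 2).choose (2 * k)) := by ring
    _ = _ := mul_div_mul_left _ _ hne

theorem threeF2_even_case_general (n j : ℕ) (h1 : 1 ≤ 2 * j) (h2 : 2 * j ≤ n) :
    ∑ k ∈ Finset.range (2 * j + 1),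
        poch (-(n : ℚ)) k * poch (-(j : ℚ)) k * poch (1 / 2 - (j : ℚ)) k
          / (poch (1 - (j : ℚ) - (n : ℚ) / 2) k * poch ((3 - (n : ℚ)) / 2 - (j : ℚ)) k
              * (Nat.factorial k : ℚ))
      = ((n : ℚ) + 1 - 4 * (j : ℚ))
          * (∏ i ∈ Finset.range (2 * j - 1), ((n : ℚ) - (i : ℚ)))
          / (∏ i ∈ Finset.range (2 * j), ((n : ℚ) - 1 + (i : ℚ))) := by
  have hn : 2 ≤ n := by omega
  have hj : j ≠ 0 := by omega
  have hsum := sum_neg_one_pow_mul_choose_mul_choose_add_two_mul (R := ℚ) (n - 2) j hj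
  rw [Nat.sub_add_cancel hn] at hsum
  calc _ = ∑ k ∈ range (2 * j + 1),
        (-1) ^ k * (n.choose k : ℚ) * (2 * j).choose (2 * k) /
          (n + 2 * j - 2).choose (2 * k) :=
        sum_congr rfl fun k _ ↦ poch_summand_eq_choose_div_choose n j k (by omega)
    _ = ∑ k ∈ range (j + 1),
        (-1) ^ k * (n.choose k : ℚ) * (2 * j).choose (2 * k) /
          (n + 2 * j - 2).choose (2 * k) := by
        refine (sum_subset (range_subset_range.2 (by omega)) fun k hk hk' ↦ ?_).symm
        rw [mem_range] at hk hk'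
        rw [Nat.choose_eq_zero_of_lt (by omega : 2 * j < 2 * k), Nat.cast_zero, mul_zero, zero_div]
    _ = ∑ k ∈ range (j + 1),
        (-1) ^ k * (n.choose k : ℚ) * (n - 2 + 2 * (j - k)).choose (n - 2) /
          (n + 2 * j - 2).choose (2 * j) := by
        refine sum_congr rfl fun k hk ↦ ?_
        rw [mem_range] at hk
        rw [mul_div_assoc, cast_choose_div_cast_choose (by omega) (by omega),
          show n + 2 * j - 2 - 2 * k = n - 2 + 2 * (j - k) by omega,
          show n + 2 * j - 2 - 2 * j = n - 2 by omega, mul_div_assoc]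
    _ = _ := by
        rw [← sum_div, hsum, Nat.cast_choose_two_mul_sub_cast_choose_div n j (by omega) hj]

/-- Evaluation of ₃F₂(−n, −j, 1/2−j; 1−j−n/2, (3−n)/2−j; 1), even case m = 2j. -/
theorem threeF2_even_case (n j : ℕ) (h1 : 1 ≤ 2 * j) (h2 : 2 * j ≤ n) (h3 : n ≥ 2 * j + 2) :
    ∑ k ∈ Finset.range (2 * j + 1),
        poch (-(n : ℚ)) k * poch (-(j : ℚ)) k * poch (1 / 2 - (j : ℚ)) k
          / (poch (1 - (j : ℚ) - (n : ℚ) / 2) k * poch ((3 - (n : ℚ)) / 2 - (j : ℚ)) k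
              * (Nat.factorial k : ℚ))
      = ((n : ℚ) + 1 - 4 * (j : ℚ))
          * (∏ i ∈ Finset.range (2 * j - 1), ((n : ℚ) - (i : ℚ)))
          / (∏ i ∈ Finset.range (2 * j), ((n : ℚ) - 1 + (i : ℚ))) :=
  threeF2_even_case_general n j h1 h2
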